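/- arXiv:math/0409194 — 2 statements merged into one kernel-verified Lean document; each statement's English description precedes it below -/
import Mathlib

section
/- Saturation of the cascade sets for well-separated axis forcing (Lemma 16.2, second bullet, 𝒵 version): Let M, K ∈ ℕ with M > 2, K > 2 and |M − K| > 2. Suppose 𝒵₀ ⊆ ℤ²_* and {(M+1,0), (M,0), (0,K+1), (0,K)} ⊆ 𝒵₀. Then 𝒵_∞ = ℤ²_*; that is, every k ∈ ℤ² with k₂ ≥ 0 and k ≠ 0 belongs to 𝒵ₙ for some n. -/
/-- The set `ℤ²_* = {k ∈ ℤ² : k₂ ≥ 0, k ≠ 0}`. -/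
def Zstar : Set (ℤ × ℤ) := {k | 0 ≤ k.2 ∧ k ≠ 0}

/-- `ℓ^⊥ · j` where `ℓ^⊥ = (-ℓ₂, ℓ₁)`. -/
def perpDot (l j : ℤ × ℤ) : ℤ := -l.2 * j.1 + l.1 * j.2

/-- The squared Euclidean norm `|k|² = k₁² + k₂²`. -/
def normSq (k : ℤ × ℤ) : ℤ := k.1 ^ 2 + k.2 ^ 2

/-- The cascade sets `𝒵ₙ`: `𝒵₀ = Z0` and
`𝒵ₙ = 𝒵ₙ₋₁ ∪ {k ∈ ℤ²_* : k ∈ {ℓ+j, ℓ-j, j-ℓ}, j ∈ 𝒵₀, ℓ ∈ 𝒵ₙ₋₁,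
  ℓ^⊥·j ≠ 0, |j| ≠ |ℓ|}`. -/
def Zcascade (Z0 : Set (ℤ × ℤ)) : ℕ → Set (ℤ × ℤ)
  | 0 => Z0
  | n + 1 =>
      Zcascade Z0 n ∪
        {k | k ∈ Zstar ∧ ∃ j ∈ Z0, ∃ l ∈ Zcascade Z0 n,
          (k = l + j ∨ k = l - j ∨ k = j - l) ∧
          perpDot l j ≠ 0 ∧ normSq j ≠ normSq l}

/-!
Adding `(0, K + 1)` and then subtracting `(0, K)` moves a point one unit up, and `(M + 1, 0)`,
`(M, 0)` similarly move it one unit sideways; the conditions `ℓ^⊥·j ≠ 0` and `|j| ≠ |ℓ|` hold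
automatically once the point is off the axis of `j` and longer than `j`. One step from the axis
forcing gives a point `(x₀, K)` with `x₀ ∈ {M, M + 1}`, so unit steps fill a column and then every
row above height `M + 2K + 2`. Subtracting `(0, K)` repeatedly brings every point off the vertical
axis down to any height `≥ 0`, and subtracting `(M, 0)` from `(M, y)` reaches the vertical axis.
-/

theorem mk_mem_Zstar_of_pos {x y : ℤ} (hy : 0 < y) : (x, y) ∈ Zstar :=
  ⟨hy.le, fun h => hy.ne' (congrArg Prod.snd h)⟩

theorem mk_mem_Zstar_of_ne_zero {x y : ℤ} (hx : x ≠ 0) (hy : 0 ≤ y) : (x, y) ∈ Zstar :=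
  ⟨hy, fun h => hx (congrArg Prod.fst h)⟩

abbrev Zinfty (Z0 : Set (ℤ × ℤ)) : Set (ℤ × ℤ) := ⋃ n, Zcascade Z0 n

namespace Zinfty

variable {Z0 : Set (ℤ × ℤ)}

theorem subset_Zstar (hZ0 : Z0 ⊆ Zstar) : Zinfty Z0 ⊆ Zstar := by
  refine Set.iUnion_subset fun n => ?_
  induction n with
  | zero => exact hZ0
  | succ n ih => exact Set.union_subset ih fun _ hk => hk.1

theorem base_subset : Z0 ⊆ Zinfty Z0 :=
  Set.subset_iUnion (Zcascade Z0) 0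

theorem mem_of_step {j l k : ℤ × ℤ} (hj : j ∈ Z0) (hl : l ∈ Zinfty Z0)
    (hk : k = l + j ∨ k = l - j ∨ k = j - l) (hkZ : k ∈ Zstar) (hperp : perpDot l j ≠ 0)
    (hnorm : normSq j ≠ normSq l) : k ∈ Zinfty Z0 := by
  obtain ⟨n, hl⟩ := Set.mem_iUnion.mp hl
  exact Set.mem_iUnion.mpr ⟨n + 1, Or.inr ⟨hkZ, j, hj, l, hl, hk, hperp, hnorm⟩⟩

theorem horizontal_step {m x y : ℤ} (hm : (m, 0) ∈ Z0) (hxy : (x, y) ∈ Zinfty Z0)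
    (hy : 0 < y) (hm0 : m ≠ 0) (hnorm : m ^ 2 ≠ x ^ 2 + y ^ 2) :
    (x + m, y) ∈ Zinfty Z0 ∧ (x - m, y) ∈ Zinfty Z0 := by
  have hperp : perpDot (x, y) (m, 0) ≠ 0 := by simp [perpDot, hy.ne', hm0]
  have hnorm' : normSq (m, 0) ≠ normSq (x, y) := by simpa [normSq] using hnorm
  exact ⟨mem_of_step hm hxy (Or.inl (by simp)) (mk_mem_Zstar_of_pos hy) hperp hnorm',
    mem_of_step hm hxy (Or.inr (Or.inl (by simp))) (mk_mem_Zstar_of_pos hy) hperp hnorm'⟩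

theorem vertical_step {m x y : ℤ} (hm : (0, m) ∈ Z0) (hxy : (x, y) ∈ Zinfty Z0)
    (hx : x ≠ 0) (hm0 : m ≠ 0) (hnorm : m ^ 2 ≠ x ^ 2 + y ^ 2) :
    (0 ≤ y + m → (x, y + m) ∈ Zinfty Z0) ∧ (0 ≤ y - m → (x, y - m) ∈ Zinfty Z0) := by
  have hperp : perpDot (x, y) (0, m) ≠ 0 := by simp [perpDot, hx, hm0]
  have hnorm' : normSq (0, m) ≠ normSq (x, y) := by simpa [normSq] using hnorm
  exact ⟨fun h => mem_of_step hm hxy (Or.inl (by simp)) (mk_mem_Zstar_of_ne_zero hx h) hperp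
      hnorm',
    fun h => mem_of_step hm hxy (Or.inr (Or.inl (by simp))) (mk_mem_Zstar_of_ne_zero hx h) hperp
      hnorm'⟩

theorem exists_mem_row {a b : ℤ} (ha : 0 < a) (ha₀ : (a, 0) ∈ Z0) (ha₁ : (a + 1, 0) ∈ Z0)
    (hb : 0 < b) (hb₀ : (0, b) ∈ Z0) : ∃ x ≠ 0, (x, b) ∈ Zinfty Z0 := by
  have h := base_subset hb₀
  rcases eq_or_ne a b with rfl | hab
  · refine ⟨a + 1, by omega, ?_⟩
    simpa using (horizontal_step ha₁ h hb (by omega) (ne_of_gt (by nlinarith))).1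
  · refine ⟨a, ha.ne', ?_⟩
    have hsq : a ^ 2 ≠ b ^ 2 := fun h => hab (by nlinarith)
    simpa using (horizontal_step ha₀ h hb ha.ne' (by simpa using hsq)).1

theorem horizontal_unit_steps {a x y : ℤ} (ha : 0 < a) (ha₀ : (a, 0) ∈ Z0)
    (ha₁ : (a + 1, 0) ∈ Z0) (hy : a + 2 ≤ y) (hxy : (x, y) ∈ Zinfty Z0) :
    (x + 1, y) ∈ Zinfty Z0 ∧ (x - 1, y) ∈ Zinfty Z0 := by
  have hy0 : 0 < y := by omega
  have short : ∀ c z : ℤ, 0 ≤ c → c ≤ a + 1 → c ^ 2 ≠ z ^ 2 + y ^ 2 := fun c z hc hca =>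
    ne_of_lt (by nlinarith [sq_nonneg z])
  constructor
  · have h := (horizontal_step ha₁ hxy hy0 (by omega) (short _ _ (by omega) le_rfl)).1
    have h' := (horizontal_step ha₀ h hy0 ha.ne' (short _ _ ha.le (by omega))).2
    rwa [show x + (a + 1) - a = x + 1 by ring] at h'
  · have h := (horizontal_step ha₀ hxy hy0 ha.ne' (short _ _ ha.le (by omega))).1
    have h' := (horizontal_step ha₁ h hy0 (by omega) (short _ _ (by omega) le_rfl)).2
    rwa [show x + a - (a + 1) = x - 1 by ring] at h'

theorem mem_row {a x₀ y : ℤ} (ha : 0 < a) (ha₀ : (a, 0) ∈ Z0) (ha₁ : (a + 1, 0) ∈ Z0)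
    (hy : a + 2 ≤ y) (h : (x₀, y) ∈ Zinfty Z0) (x : ℤ) : (x, y) ∈ Zinfty Z0 :=
  Int.inductionOn' x x₀ h (fun _ _ hk => (horizontal_unit_steps ha ha₀ ha₁ hy hk).1)
    fun _ _ hk => (horizontal_unit_steps ha ha₀ ha₁ hy hk).2

theorem vertical_unit_step {b x y : ℤ} (hb : 0 < b) (hb₀ : (0, b) ∈ Z0)
    (hb₁ : (0, b + 1) ∈ Z0) (hx : x ≠ 0) (hy : b + 1 ≤ y) (hxy : (x, y) ∈ Zinfty Z0) :
    (x, y + 1) ∈ Zinfty Z0 := by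
  have hx2 : 0 < x ^ 2 := by positivity
  have h := (vertical_step hb₁ hxy hx (by omega) (ne_of_lt (by nlinarith))).1 (by omega)
  have h' := (vertical_step hb₀ h hx hb.ne' (ne_of_lt (by nlinarith))).2 (by omega)
  rwa [show y + (b + 1) - b = y + 1 by ring] at h'

theorem mem_column {b x y₀ : ℤ} (hb : 0 < b) (hb₀ : (0, b) ∈ Z0) (hb₁ : (0, b + 1) ∈ Z0)
    (hx : x ≠ 0) (hy₀ : b + 1 ≤ y₀) (h : (x, y₀) ∈ Zinfty Z0) {y : ℤ} (hy : y₀ ≤ y) :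
    (x, y) ∈ Zinfty Z0 := by
  induction y, hy using Int.leInduction with
  | base => exact h
  | succ y hy ih => exact vertical_unit_step hb hb₀ hb₁ hx (by omega) ih

theorem mem_of_forall_ge {b x Y : ℤ} (hb : 0 < b) (hb₀ : (0, b) ∈ Z0) (hx : x ≠ 0)
    (hY : ∀ y, Y ≤ y → (x, y) ∈ Zinfty Z0) {y : ℤ} (hy : 0 ≤ y) : (x, y) ∈ Zinfty Z0 := by
  have hx2 : 0 < x ^ 2 := by positivity
  have descend : ∀ n : ℕ, (x, y + n * b) ∈ Zinfty Z0 → (x, y) ∈ Zinfty Z0 := by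
    intro n
    induction n with
    | zero => simp
    | succ n ih =>
      intro h
      have hn : (0 : ℤ) ≤ n * b := by positivity
      have h' := (vertical_step hb₀ h hx hb.ne' (ne_of_lt (by push_cast; nlinarith))).2
        (by push_cast; linarith)
      exact ih (by rwa [show y + ((n + 1 : ℕ) : ℤ) * b - b = y + n * b by push_cast; ring] at h')
  exact descend Y.toNat (hY _ (by nlinarith [Int.self_le_toNat Y, Int.natCast_nonneg Y.toNat]))

theorem eq_Zstar {a b : ℤ} (ha : 0 < a) (hb : 0 < b) (hZ0 : Z0 ⊆ Zstar)
    (ha₀ : (a, 0) ∈ Z0) (ha₁ : (a + 1, 0) ∈ Z0) (hb₀ : (0, b) ∈ Z0) (hb₁ : (0, b + 1) ∈ Z0) :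
    Zinfty Z0 = Zstar := by
  obtain ⟨x₀, hx₀, h⟩ := exists_mem_row ha ha₀ ha₁ hb hb₀
  have hx₀2 : 0 < x₀ ^ 2 := by positivity
  have h2b := (vertical_step hb₀ h hx₀ hb.ne' (ne_of_lt (by nlinarith))).1 (by omega)
  have high : ∀ x y, a + 2 * b + 2 ≤ y → (x, y) ∈ Zinfty Z0 := fun x y hy =>
    mem_row ha ha₀ ha₁ (by omega) (mem_column hb hb₀ hb₁ hx₀ (by omega) h2b (by omega)) x
  have off_axis : ∀ x y, x ≠ 0 → 0 ≤ y → (x, y) ∈ Zinfty Z0 := fun x _ hx hy =>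
    mem_of_forall_ge hb hb₀ hx (high x) hy
  refine (subset_Zstar hZ0).antisymm ?_
  rintro ⟨x, y⟩ ⟨hy, hxy⟩
  rcases eq_or_ne x 0 with rfl | hx
  · have hy : 0 < y := lt_of_le_of_ne hy fun h => hxy (by simp [← h])
    simpa using (horizontal_step ha₀ (off_axis a y ha.ne' hy.le) hy ha.ne'
      (ne_of_lt (by nlinarith))).2
  · exact off_axis x y hx hy

end Zinfty

theorem cascade_saturates_axisForcing_general (M K : ℕ)
    (hM : 2 < M) (hK : 2 < K)
    (Z0 : Set (ℤ × ℤ)) (hZ0 : Z0 ⊆ Zstar)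
    (hforce : ({(((M : ℤ) + 1), (0:ℤ)), ((M : ℤ), (0:ℤ)),
        ((0:ℤ), ((K : ℤ) + 1)), ((0:ℤ), (K : ℤ))} : Set (ℤ × ℤ)) ⊆ Z0) :
    (⋃ n, Zcascade Z0 n) = Zstar :=
  Zinfty.eq_Zstar (a := M) (b := K) (by omega) (by omega) hZ0 (hforce (by simp)) (hforce (by simp))
    (hforce (by simp)) (hforce (by simp))

/-- Saturation of the cascade sets for well-separated axis forcing (Lemma 16.2,
second bullet, `𝒵` version): if `M, K > 2`, `|M - K| > 2` and
`{(M+1,0), (M,0), (0,K+1), (0,K)} ⊆ 𝒵₀`, then `𝒵_∞ = ℤ²_*`. -/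
theorem cascade_saturates_axisForcing (M K : ℕ)
    (hM : 2 < M) (hK : 2 < K) (hMK : 2 < |(M : ℤ) - (K : ℤ)|)
    (Z0 : Set (ℤ × ℤ)) (hZ0 : Z0 ⊆ Zstar)
    (hforce : ({(((M : ℤ) + 1), (0:ℤ)), ((M : ℤ), (0:ℤ)),
        ((0:ℤ), ((K : ℤ) + 1)), ((0:ℤ), (K : ℤ))} : Set (ℤ × ℤ)) ⊆ Z0) :
    (⋃ n, Zcascade Z0 n) = Zstar :=
  cascade_saturates_axisForcing_general M K hM hK Z0 hZ0 hforce
end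

section
/- Backward uniqueness under a logarithmic envelope (the core of the uniqueness argument of Theorem 7.4): Assume γ := c₁ − cC₁ > 0. Let a : (−∞,0] → [0,∞) be locally integrable with ∫ₜ⁰ a(s) ds ≤ C₁|t| + n(1 + log(1+|t|)) for all t ≤ 0, and let ρ : (−∞,0] → [0,∞) be absolutely continuous with ρ′(t) ≤ (−c₁ + c·a(t)) ρ(t) for almost every t ≤ 0. If moreover there is a constant E₀ ≥ 0 such that ρ(t)² ≤ 4(E₀ + n(1 + log(1+|t|))) for all t ≤ 0, then ρ(0) = 0. -/
/-!
On `[t, 0]` the weight `exp (-∫ₜ (-c₁ + c a))` turns the differential inequality into the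
monotonicity of `ρ · weight` (Grönwall, via integration by parts for absolutely continuous
functions), so `ρ 0 ≤ ρ t · exp (-c₁|t| + c ∫ₜ⁰ a)`. The envelope for `∫ a` bounds the
exponent by `-γ|t| + c n (1 + log (1 + |t|))` and the envelope for `ρ²` bounds `ρ t` linearly
in `|t|`, so `ρ 0 ≤ K (1 + |t|)^(1 + c n) e^{-γ|t|}`, which tends to `0` as `t → -∞`.
-/

open MeasureTheory Set Filter Topology

theorem LipschitzOnWith.comp_absolutelyContinuousOnInterval {X Y : Type*} [PseudoMetricSpace X]
    [PseudoMetricSpace Y] {f : X → Y} {K : NNReal} {s : Set X} {g : ℝ → X} {a b : ℝ}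
    (hf : LipschitzOnWith K f s) (hg : AbsolutelyContinuousOnInterval g a b)
    (hgs : MapsTo g (uIcc a b) s) : AbsolutelyContinuousOnInterval (f ∘ g) a b := by
  unfold AbsolutelyContinuousOnInterval at hg ⊢
  have hlim := hg.const_mul (K : ℝ)
  rw [mul_zero] at hlim
  refine squeeze_zero' (.of_forall fun _ => Finset.sum_nonneg fun _ _ => dist_nonneg) ?_ hlim
  filter_upwards [mem_inf_of_right (mem_principal_self _)] with E hE
  rw [Finset.mul_sum]
  exact Finset.sum_le_sum fun i hi =>
    hf.dist_le_mul _ (hgs (hE.1 i hi).1) _ (hgs (hE.1 i hi).2)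

theorem AbsolutelyContinuousOnInterval.rexp {f : ℝ → ℝ} {a b : ℝ}
    (hf : AbsolutelyContinuousOnInterval f a b) :
    AbsolutelyContinuousOnInterval (fun x => Real.exp (f x)) a b := by
  obtain ⟨C, hC⟩ := hf.exists_bound
  obtain ⟨K, hK⟩ := Real.contDiff_exp.contDiffOn.exists_lipschitzOnWith (s := Icc (-C) C)
    one_ne_zero (convex_Icc _ _) isCompact_Icc
  exact hK.comp_absolutelyContinuousOnInterval hf fun x hx => abs_le.1 (hC x hx)

/-- Grönwall's inequality for absolutely continuous `f`: with `E = exp (-∫ᵤ b)`, the derivative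
`(f E)' = (f' - b f) E` is a.e. nonpositive. -/
theorem le_mul_exp_integral_of_eq_add_integral {f f' b : ℝ → ℝ} {u v : ℝ} (huv : u ≤ v)
    (hf : ∀ x ∈ Icc u v, f x = f u + ∫ y in u..x, f' y)
    (hf' : IntervalIntegrable f' volume u v) (hb : IntervalIntegrable b volume u v)
    (hle : ∀ᵐ x, x ∈ Icc u v → f' x ≤ b x * f x) :
    f v ≤ f u * Real.exp (∫ x in u..v, b x) := by
  set F : ℝ → ℝ := fun x => f u + ∫ y in u..x, f' y
  set E : ℝ → ℝ := fun x => Real.exp (-∫ y in u..x, b y)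
  have hu : u ∈ uIcc u v := left_mem_uIcc
  have hFac : AbsolutelyContinuousOnInterval F u v :=
    (LipschitzWith.const (f u)).lipschitzOnWith.absolutelyContinuousOnInterval.add
      (hf'.absolutelyContinuousOnInterval_intervalIntegral hu)
  have hEac : AbsolutelyContinuousOnInterval E u v :=
    (hb.absolutelyContinuousOnInterval_intervalIntegral hu).neg.rexp
  have hderiv : ∀ᵐ x ∂volume.restrict (Ioc u v), deriv F x * E x + F x * deriv E x ≤ 0 := by
    rw [ae_restrict_iff' measurableSet_Ioc]
    filter_upwards [hf'.ae_hasDerivAt_integral, hb.ae_hasDerivAt_integral, hle]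
      with x hF hB hx hxI
    have hxI' : x ∈ Icc u v := Ioc_subset_Icc_self hxI
    have hxu : x ∈ uIcc u v := by rwa [uIcc_of_le huv]
    have hFx : HasDerivAt F (f' x) x := (hF hxu u hu).const_add (f u)
    have hEx : HasDerivAt E (E x * -b x) x := (hB hxu u hu).neg.exp
    have hFf : F x = f x := (hf x hxI').symm
    rw [hFx.deriv, hEx.deriv, hFf]
    nlinarith [Real.exp_pos (-∫ y in u..x, b y), hx hxI']
  have hnonpos : ∫ x in u..v, deriv F x * E x + F x * deriv E x ≤ 0 := by
    rw [intervalIntegral.integral_of_le huv]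
    exact integral_nonpos_of_ae hderiv
  have hFu : F u = f u := by simp [F]
  have hFv : F v = f v := (hf v (right_mem_Icc.2 huv)).symm
  have hEu : E u = 1 := by simp [E]
  have hEv : E v = (Real.exp (∫ x in u..v, b x))⁻¹ := Real.exp_neg _
  rwa [hFac.integral_deriv_mul_eq_sub hEac, hFu, hFv, hEu, hEv, mul_one, sub_nonpos,
    ← div_eq_mul_inv, div_le_iff₀ (Real.exp_pos _)] at hnonpos

theorem tendsto_one_add_rpow_mul_exp_neg_mul_atTop_nhds_zero (s : ℝ) {b : ℝ} (hb : 0 < b) :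
    Tendsto (fun x : ℝ => (1 + x) ^ s * Real.exp (-b * x)) atTop (𝓝 0) := by
  have h := ((tendsto_rpow_mul_exp_neg_mul_atTop_nhds_zero s b hb).comp
    (tendsto_atTop_add_const_left _ 1 tendsto_id)).const_mul (Real.exp b)
  rw [mul_zero] at h
  refine h.congr fun x => ?_
  simp only [Function.comp_apply, id]
  rw [mul_left_comm, ← Real.exp_add]
  ring_nf

theorem nonpos_of_forall_le_mul_exp_neg_mul_add_log {r A γ k : ℝ} (hγ : 0 < γ)
    (h : ∀ x : ℝ, 0 ≤ x →
      r ≤ A * (1 + x) * Real.exp (-γ * x + k * (1 + Real.log (1 + x)))) :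
    r ≤ 0 := by
  have hlim := (tendsto_one_add_rpow_mul_exp_neg_mul_atTop_nhds_zero (1 + k) hγ).const_mul
    (A * Real.exp k)
  rw [mul_zero] at hlim
  refine ge_of_tendsto hlim (eventually_atTop.2 ⟨0, fun x hx => (h x hx).trans_eq ?_⟩)
  have hx1 : 0 < 1 + x := by linarith
  rw [Real.rpow_add hx1, Real.rpow_one, Real.rpow_def_of_pos hx1, mul_add k, mul_one,
    Real.exp_add, Real.exp_add]
  ring_nf

theorem backward_uniqueness_log_envelope_general
    (c₁ c C₁ n : ℝ) (hc : 0 ≤ c) (hn : 0 ≤ n)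
    (hγ : 0 < c₁ - c * C₁)
    (a g ρ : ℝ → ℝ)
    (ha_int : ∀ t ≤ (0:ℝ), IntervalIntegrable a volume t 0)
    (ha_bound : ∀ t ≤ (0:ℝ),
      (∫ s in t..(0:ℝ), a s) ≤ C₁ * |t| + n * (1 + Real.log (1 + |t|)))
    (hρ_nonneg : ∀ t ≤ (0:ℝ), 0 ≤ ρ t)
    (hg_int : ∀ t ≤ (0:ℝ), IntervalIntegrable g volume t 0)
    (hρ_ac : ∀ s t : ℝ, s ≤ t → t ≤ 0 → ρ t = ρ s + ∫ r in s..t, g r)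
    (hg_bound : ∀ᵐ s ∂(volume : Measure ℝ),
      s ≤ (0:ℝ) → g s ≤ (-c₁ + c * a s) * ρ s)
    (E₀ : ℝ) (hE₀ : 0 ≤ E₀)
    (hρ_bound : ∀ t ≤ (0:ℝ), (ρ t) ^ 2 ≤ 4 * (E₀ + n * (1 + Real.log (1 + |t|)))) :
    ρ 0 = 0 := by
  set γ := c₁ - c * C₁
  refine le_antisymm (nonpos_of_forall_le_mul_exp_neg_mul_add_log (A := E₀ + n + 1)
    (k := c * n) hγ fun x hx => ?_) (hρ_nonneg 0 le_rfl)
  have ht : -x ≤ 0 := neg_nonpos.2 hx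
  have habs : |-x| = x := by rw [abs_neg, abs_of_nonneg hx]
  set L := Real.log (1 + x)
  have hL : L ≤ x := by linarith [Real.log_le_sub_one_of_pos (by linarith : 0 < 1 + x)]
  have hgronwall : ρ 0 ≤ ρ (-x) * Real.exp (∫ s in -x..0, (-c₁ + c * a s)) :=
    le_mul_exp_integral_of_eq_add_integral ht (fun y hy => hρ_ac _ _ hy.1 hy.2) (hg_int _ ht)
      (intervalIntegrable_const.add ((ha_int _ ht).const_mul c))
      (by filter_upwards [hg_bound] with s hs hsI using hs hsI.2)
  have hexponent : ∫ s in -x..0, (-c₁ + c * a s) ≤ -γ * x + c * n * (1 + L) := by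
    have := ha_bound (-x) ht
    rw [habs] at this
    rw [intervalIntegral.integral_add intervalIntegrable_const ((ha_int _ ht).const_mul c),
      intervalIntegral.integral_const_mul, intervalIntegral.integral_const, smul_eq_mul]
    nlinarith [mul_le_mul_of_nonneg_left this hc]
  have hρx : ρ (-x) ≤ (E₀ + n + 1) * (1 + x) := by
    have := hρ_bound (-x) ht
    rw [habs] at this
    nlinarith [sq_nonneg (ρ (-x) - 2), mul_le_mul_of_nonneg_left hL hn]
  calc ρ 0 ≤ ρ (-x) * Real.exp (-γ * x + c * n * (1 + L)) :=
        hgronwall.trans (mul_le_mul_of_nonneg_left (Real.exp_le_exp.2 hexponent) (hρ_nonneg _ ht))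
    _ ≤ (E₀ + n + 1) * (1 + x) * Real.exp (-γ * x + c * n * (1 + L)) := by gcongr

/-- Backward uniqueness under a logarithmic envelope (the core of the
uniqueness argument of Theorem 7.4). Here `γ := c₁ - c C₁ > 0`, `a` satisfies
the logarithmic-envelope integral bound on each `[t,0]`, `ρ` is absolutely
continuous on `(-∞,0]` with `ρ' ≤ (-c₁ + c·a) ρ` a.e. (expressed in integral
form via `g`), and `ρ(t)² ≤ 4(E₀ + n(1 + log(1+|t|)))`; then `ρ(0) = 0`. -/
theorem backward_uniqueness_log_envelope
    (c₁ c C₁ n : ℝ) (hc₁ : 0 ≤ c₁) (hc : 0 ≤ c) (hC₁ : 0 ≤ C₁) (hn : 0 ≤ n)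
    (hγ : 0 < c₁ - c * C₁)
    (a g ρ : ℝ → ℝ)
    (ha_nonneg : ∀ t ≤ (0:ℝ), 0 ≤ a t)
    (ha_int : ∀ t ≤ (0:ℝ), IntervalIntegrable a volume t 0)
    (ha_bound : ∀ t ≤ (0:ℝ),
      (∫ s in t..(0:ℝ), a s) ≤ C₁ * |t| + n * (1 + Real.log (1 + |t|)))
    (hρ_nonneg : ∀ t ≤ (0:ℝ), 0 ≤ ρ t)
    (hg_int : ∀ t ≤ (0:ℝ), IntervalIntegrable g volume t 0)
    (hρ_ac : ∀ s t : ℝ, s ≤ t → t ≤ 0 → ρ t = ρ s + ∫ r in s..t, g r)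
    (hg_bound : ∀ᵐ s ∂(volume : Measure ℝ),
      s ≤ (0:ℝ) → g s ≤ (-c₁ + c * a s) * ρ s)
    (E₀ : ℝ) (hE₀ : 0 ≤ E₀)
    (hρ_bound : ∀ t ≤ (0:ℝ), (ρ t) ^ 2 ≤ 4 * (E₀ + n * (1 + Real.log (1 + |t|)))) :
    ρ 0 = 0 :=
  backward_uniqueness_log_envelope_general c₁ c C₁ n hc hn hγ a g ρ ha_int ha_bound hρ_nonneg hg_int
    hρ_ac hg_bound E₀ hE₀ hρ_bound
end
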